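/- arXiv:1610.06005 — 3 statements merged into one kernel-verified Lean document; each statement's English description precedes it below -/
import Mathlib

section
/- Let n ≥ 2 and let T : ℝ^n → ℝ^m be a linear map. Let Im(μ_T) = {μ_T(P) : P an n-system with unbounded domain} and Im*(μ_T) = {μ_T(P) : P a proper n-system}. If n ≥ 3, let ι : ℝ^{n−1} → ℝ^n be the linear map ι(x_2, …, x_n) = (0, x_2, …, x_n); then Im(μ_T) = Im*(μ_T) ∪ Im(μ_{T∘ι}), where Im(μ_{T∘ι}) = {μ_{T∘ι}(R) : R an (n−1)-system with unbounded domain}. If n = 2, then Im(μ_T) = Im*(μ_T) ∪ {T(0,1)}. -/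
open Filter Set Pointwise Topology

noncomputable section

/-- Points of `ℝ^n`. -/
abbrev RVec (n : ℕ) := Fin n → ℝ

/-- The vector of `ℝ^n` with a `1` in position `j` (0-based) and `0` elsewhere;
`eVec n 0` is the first canonical basis vector `e_1`. -/
def eVec (n : ℕ) (j : ℕ) : RVec n := fun i => if (i : ℕ) = j then 1 else 0

/-- `P` is an `n`-system on the subinterval `I` of `[0,∞)`:
`I` is an order-connected subset of `[0,∞)` with nonempty interior, and conditions
(S1), (S2), (S3) hold at every `q ∈ I`. -/
def IsNSystem (n : ℕ) (I : Set ℝ) (P : ℝ → RVec n) : Prop :=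
  I ⊆ Set.Ici (0 : ℝ) ∧ I.OrdConnected ∧ (interior I).Nonempty ∧
  ∀ q ∈ I,
    ((∀ i, 0 ≤ P q i) ∧ Monotone (P q) ∧ (∑ i, P q i) = q) ∧
    ∃ ε > (0 : ℝ), ∃ k ℓ : Fin n,
      (∀ t ∈ I ∩ Set.Icc (q - ε) q, P t = P q + (t - q) • eVec n ℓ) ∧
      (∀ t ∈ I ∩ Set.Icc q (q + ε), P t = P q + (t - q) • eVec n k) ∧
      (q ∈ interior I → ℓ < k → ∀ i : Fin n, ℓ ≤ i → i ≤ k → P q i = P q ℓ)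

/-- `P` is a proper `n`-system on `I`: it is an `n`-system whose first component is
unbounded (by the monotonicity (S1) of the components, this is equivalent to all
components simultaneously exceeding any given bound). -/
def IsProperSys (n : ℕ) (I : Set ℝ) (P : ℝ → RVec n) : Prop :=
  IsNSystem n I P ∧ ∀ M : ℝ, ∃ q ∈ I, ∀ i, M < P q i

/-- The set `F(P)` of limits of `q_i⁻¹ • P(q_i)` along strictly increasing unbounded
sequences `(q_i)` in `I`. -/
def FSet (n : ℕ) (I : Set ℝ) (P : ℝ → RVec n) : Set (RVec n) :=
  {x | ∃ q : ℕ → ℝ, (∀ i, q i ∈ I) ∧ StrictMono q ∧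
    Tendsto q atTop atTop ∧ Tendsto (fun i => (q i)⁻¹ • P (q i)) atTop (𝓝 x)}

/-- The set `F(P, e₁)`: as `F(P)`, but with the extra requirement that the right
derivative of `P` at each `q_i` is the first basis vector `e_1`. -/
def FSetE1 (n : ℕ) (I : Set ℝ) (P : ℝ → RVec n) : Set (RVec n) :=
  {x | ∃ q : ℕ → ℝ, (∀ i, q i ∈ I) ∧ StrictMono q ∧ Tendsto q atTop atTop ∧
    (∀ i, ∃ ε > (0 : ℝ), ∀ t ∈ I ∩ Set.Icc (q i) (q i + ε),
      P t = P (q i) + (t - q i) • eVec n 0) ∧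
    Tendsto (fun i => (q i)⁻¹ • P (q i)) atTop (𝓝 x)}

/-- `q` is a switch number of the `n`-system `P` on `I`: a point of `I` on the boundary
of `I`, or an interior point where the local slopes `e_k` (right) and `e_ℓ` (left)
from (S2) satisfy `k < ℓ`. -/
def IsSwitchNumber (n : ℕ) (I : Set ℝ) (P : ℝ → RVec n) (q : ℝ) : Prop :=
  q ∈ I ∧ (q ∈ frontier I ∨
    (q ∈ interior I ∧ ∃ ε > (0 : ℝ), ∃ k ℓ : Fin n, k < ℓ ∧
      (∀ t ∈ I ∩ Set.Icc (q - ε) q, P t = P q + (t - q) • eVec n ℓ) ∧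
      (∀ t ∈ I ∩ Set.Icc q (q + ε), P t = P q + (t - q) • eVec n k)))

/-- `q` is a division number of the `n`-system `P` on `I`: a point of `I` on the boundary
of `I`, or an interior point where `P` is not differentiable, i.e. where the left and
right slopes from (S2) differ. -/
def IsDivisionNumber (n : ℕ) (I : Set ℝ) (P : ℝ → RVec n) (q : ℝ) : Prop :=
  q ∈ I ∧ (q ∈ frontier I ∨
    (q ∈ interior I ∧ ∃ ε > (0 : ℝ), ∃ k ℓ : Fin n, k ≠ ℓ ∧
      (∀ t ∈ I ∩ Set.Icc (q - ε) q, P t = P q + (t - q) • eVec n ℓ) ∧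
      (∀ t ∈ I ∩ Set.Icc q (q + ε), P t = P q + (t - q) • eVec n k)))

/-- A non-degenerate `n`-system: an `n`-system whose domain is a closed subinterval
of `(0,∞)` and whose switch points all have `n` distinct positive coordinates. -/
def IsNonDegenerate (n : ℕ) (I : Set ℝ) (P : ℝ → RVec n) : Prop :=
  IsNSystem n I P ∧ IsClosed I ∧ I ⊆ Set.Ioi (0 : ℝ) ∧
  ∀ q, IsSwitchNumber n I P q → (∀ i, 0 < P q i) ∧ StrictMono (P q)

/-- A rigid `n`-system of mesh `δ`: a non-degenerate `n`-system whose switch points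
belong to `δℤ^n`. -/
def IsRigid (n : ℕ) (δ : ℝ) (I : Set ℝ) (P : ℝ → RVec n) : Prop :=
  IsNonDegenerate n I P ∧
  ∀ q, IsSwitchNumber n I P q → ∀ i, ∃ m : ℤ, P q i = δ * m

/-- A self-similar system: the domain is unbounded and there is `ρ > 1` with
`P(ρq) = ρ • P(q)` for all `q` in the domain. -/
def IsSelfSimilar (n : ℕ) (I : Set ℝ) (P : ℝ → RVec n) : Prop :=
  ¬ BddAbove I ∧ ∃ ρ : ℝ, 1 < ρ ∧ ∀ q ∈ I, ρ * q ∈ I ∧ P (ρ * q) = ρ • P q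

/-- The cube `[-ε, ε]^n`. -/
def cubeNbhd (n : ℕ) (ε : ℝ) : Set (RVec n) := {y | ∀ i, |y i| ≤ ε}

/-- The distance `dist(E, F)`: the infimum of all `ε > 0` such that
`E ⊆ F + [-ε,ε]^n` and `F ⊆ E + [-ε,ε]^n`. -/
def cubeDist (n : ℕ) (E F : Set (RVec n)) : ℝ :=
  sInf {ε : ℝ | 0 < ε ∧ E ⊆ F + cubeNbhd n ε ∧ F ⊆ E + cubeNbhd n ε}

/-- `μ_T(P)`: the point of `ℝ^m` whose `j`-th coordinate is
`liminf_{q → ∞, q ∈ I} T_j(P(q))/q`. -/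
def muT (n m : ℕ) (T : RVec n → RVec m) (I : Set ℝ) (P : ℝ → RVec n) : RVec m :=
  fun j => Filter.liminf (fun q => T (P q) j / q) (atTop ⊓ 𝓟 I)

/-- `liminf` of a sequence of subsets of `ℝ^n`: the set of limits of convergent
sequences `(x_i)` with `x_i ∈ F i` for every `i`. -/
def setLiminf (n : ℕ) (F : ℕ → Set (RVec n)) : Set (RVec n) :=
  {x | ∃ y : ℕ → RVec n, (∀ i, y i ∈ F i) ∧ Tendsto y atTop (𝓝 x)}

/-- `limsup` of a sequence of subsets of `ℝ^n`: the set of accumulation points of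
sequences `(x_i)` with `x_i ∈ F i` for every `i`, i.e. limits of convergent
subsequences. -/
def setLimsup (n : ℕ) (F : ℕ → Set (RVec n)) : Set (RVec n) :=
  {x | ∃ (y : ℕ → RVec n) (φ : ℕ → ℕ), (∀ i, y i ∈ F i) ∧ StrictMono φ ∧
    Tendsto (y ∘ φ) atTop (𝓝 x)}
/-- The embedding `ι : ℝ^{n-1} → ℝ^n`, `ι(x₂, …, x_n) = (0, x₂, …, x_n)`. -/
def iotaEmb (n : ℕ) (x : RVec (n - 1)) : RVec n :=
  fun i => if h : (i : ℕ) = 0 then 0 else x ⟨(i : ℕ) - 1, by omega⟩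

/-!
A system with unbounded domain is either proper or has a bounded first coordinate `P₁ ≤ M`.
In the second case `s = q - P₁(q)` is a continuous nondecreasing reparametrization of the domain
tending to infinity, and deleting `P₁` gives an `(n - 1)`-system `R` with
`ι(R(s)) = P(q) - P₁(q) e₁`. Since `P₁(q)/s → 0`, the ratios `T(P(q))/q` and `T(ι(R(s)))/s` have
the same lower limits, i.e. `μ_T(P) = μ_{T∘ι}(R)`. Conversely `ι ∘ R` is an `n`-system for every
`(n - 1)`-system `R`. For `n = 2` the only `1`-system is `q ↦ q`, so that `μ_{T∘ι}(R) = T(0, 1)`.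
-/

lemma eVec_zero (n : ℕ) : eVec (n + 1) 0 = Fin.cons 1 0 := by
  ext i
  induction i using Fin.cases <;> simp [eVec]

lemma eVec_succ (n j : ℕ) : eVec (n + 1) (j + 1) = Fin.cons 0 (eVec n j) := by
  ext i
  induction i using Fin.cases <;> simp [eVec]

lemma iotaEmb_succ {n : ℕ} (x : RVec n) : iotaEmb (n + 1) x = Fin.cons 0 x := by
  ext i
  induction i using Fin.cases <;> simp [iotaEmb]

lemma norm_eVec_le_one (n j : ℕ) : ‖eVec n j‖ ≤ 1 :=
  (pi_norm_le_iff_of_nonneg zero_le_one).2 fun i => by unfold eVec; split_ifs <;> simp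

lemma eVec_nonneg (n j : ℕ) (i : Fin n) : 0 ≤ eVec n j i := by
  unfold eVec; split_ifs <;> simp

lemma Set.OrdConnected.Ici_subset_of_not_bddAbove {I : Set ℝ} (hI : I.OrdConnected)
    (hub : ¬BddAbove I) {t : ℝ} (ht : t ∈ I) : Ici t ⊆ I := fun x hx => by
  obtain ⟨b, hb, hxb⟩ := not_bddAbove_iff.1 hub x
  exact hI.out ht hb ⟨hx, hxb.le⟩

lemma neBot_atTop_inf_principal {I : Set ℝ} (hub : ¬BddAbove I) : (atTop ⊓ 𝓟 I).NeBot := by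
  refine inf_principal_neBot_iff.2 fun U hU => ?_
  obtain ⟨x, hx⟩ := mem_atTop_sets.1 hU
  obtain ⟨t, htI, hxt⟩ := not_bddAbove_iff.1 hub x
  exact ⟨t, hx t hxt.le, htI⟩

lemma monotoneOn_of_continuousOn_of_forall_right {I : Set ℝ} (hI : I.OrdConnected) {f : ℝ → ℝ}
    (hf : ContinuousOn f I) (hright : ∀ x ∈ I, ∃ ε > 0, ∀ t ∈ I ∩ Icc x (x + ε), f x ≤ f t) :
    MonotoneOn f I := by
  intro a ha b hb hab
  have hIcc : Icc a b ⊆ I := hI.out ha hb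
  have hclosed : IsClosed ({x | f a ≤ f x} ∩ Icc a b) := by
    rw [inter_comm]
    exact (hf.mono hIcc).preimage_isClosed_of_isClosed isClosed_Icc isClosed_Ici
  refine IsClosed.Icc_subset_of_forall_mem_nhdsWithin hclosed (le_refl (f a)) ?_ ⟨hab, le_rfl⟩
  rintro x ⟨hx, hax, hxb⟩
  obtain ⟨ε, hε, hxε⟩ := hright x (hIcc ⟨hax, hxb.le⟩)
  filter_upwards [Ioo_mem_nhdsGT (lt_min hxb (lt_add_of_pos_right x hε))] with t ht
  exact hx.trans <| hxε t ⟨hIcc ⟨hax.trans ht.1.le, ht.2.le.trans (min_le_left _ _)⟩,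
    ht.1.le, ht.2.le.trans (min_le_right _ _)⟩

lemma ContinuousOn.apply_eq_of_mem_closure_fiber {X Y : Type*} [TopologicalSpace X]
    [TopologicalSpace Y] [T1Space Y] {f : X → Y} {I : Set X} (hf : ContinuousOn f I) {x : X}
    (hx : x ∈ I) {y : Y} (hcl : x ∈ closure {t ∈ I | f t = y}) : f x = y := by
  have := ((hf x hx).mono (sep_subset _ _)).mem_closure_image hcl
  rw [← mem_singleton_iff, ← closure_singleton (x := y)]
  exact closure_mono (by rintro _ ⟨t, ht, rfl⟩; exact ht.2) this

lemma MonotoneOn.map_atTop_inf_principal {I : Set ℝ} {f : ℝ → ℝ} (hf : MonotoneOn f I)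
    (hub : ¬BddAbove I) (htop : Tendsto f (atTop ⊓ 𝓟 I) atTop) :
    map f (atTop ⊓ 𝓟 I) = atTop ⊓ 𝓟 (f '' I) := by
  refine le_antisymm (le_inf htop (le_principal_iff.2 ?_)) fun S hS => ?_
  · exact image_mem_map (mem_inf_of_right (mem_principal_self I))
  rw [mem_map, mem_inf_principal] at hS
  obtain ⟨x₀, hx₀⟩ := mem_atTop_sets.1 hS
  obtain ⟨x₁, hx₁, hx₀₁⟩ := not_bddAbove_iff.1 hub x₀
  refine mem_inf_principal.2 (mem_atTop_sets.2 ⟨f x₁, ?_⟩)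
  rintro _ hs ⟨t, ht, rfl⟩
  rcases le_or_gt x₀ t with hx₀t | htx₀
  · exact hx₀ t hx₀t ht
  · have : f t = f x₁ := le_antisymm (hf ht hx₁ (htx₀.trans hx₀₁).le) hs
    simpa [this] using hx₀ x₁ hx₀₁.le hx₁

lemma liminf_eq_of_tendsto_sub {ι : Type*} {F : Filter ι} [F.NeBot] {u w : ι → ℝ}
    (hu : IsBoundedUnder (· ≤ ·) F u) (hu' : IsBoundedUnder (· ≥ ·) F u)
    (hwu : Tendsto (fun x => w x - u x) F (𝓝 0)) : liminf w F = liminf u F := by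
  have hw : (fun x => w x - u x) + u = w := by ext; simp
  apply le_antisymm
  · simpa [hwu.limsup_eq, hw] using liminf_add_le hwu.isBoundedUnder_ge hwu.isBoundedUnder_le hu'
      hu.isCoboundedUnder_ge
  · simpa [hwu.liminf_eq, hw] using le_liminf_add hwu.isBoundedUnder_ge hwu.isBoundedUnder_le hu'
      hu.isCoboundedUnder_ge

namespace IsNSystem

variable {n : ℕ} {I : Set ℝ} {P : ℝ → RVec n}

lemma ordConnected (hP : IsNSystem n I P) : I.OrdConnected := hP.2.1

lemma nonneg (hP : IsNSystem n I P) {q : ℝ} (hq : q ∈ I) (i : Fin n) : 0 ≤ P q i :=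
  (hP.2.2.2 q hq).1.1 i

lemma monotone (hP : IsNSystem n I P) {q : ℝ} (hq : q ∈ I) : Monotone (P q) :=
  (hP.2.2.2 q hq).1.2.1

lemma sum_eq (hP : IsNSystem n I P) {q : ℝ} (hq : q ∈ I) : ∑ i, P q i = q :=
  (hP.2.2.2 q hq).1.2.2

lemma apply_le (hP : IsNSystem n I P) {q : ℝ} (hq : q ∈ I) (i : Fin n) : P q i ≤ q :=
  (Finset.single_le_sum (fun j _ => hP.nonneg hq j) (Finset.mem_univ i)).trans_eq (hP.sum_eq hq)

lemma norm_inv_smul_le_one (hP : IsNSystem n I P) {q : ℝ} (hq : q ∈ I) : ‖q⁻¹ • P q‖ ≤ 1 := by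
  refine (pi_norm_le_iff_of_nonneg zero_le_one).2 fun i => ?_
  have hq0 : 0 ≤ q := hP.1 hq
  rw [Pi.smul_apply, smul_eq_mul, norm_mul, Real.norm_of_nonneg (inv_nonneg.2 hq0),
    Real.norm_of_nonneg (hP.nonneg hq i)]
  exact inv_mul_le_one_of_le₀ (hP.apply_le hq i) hq0

lemma continuousOn (hP : IsNSystem n I P) : ContinuousOn P I := by
  intro q hq
  obtain ⟨-, ε, hε, k, ℓ, hl, hr, -⟩ := hP.2.2.2 q hq
  have hline (j : Fin n) : Continuous fun t => P q + (t - q) • eVec n j := by fun_prop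
  have hlr := continuousWithinAt_union.2
    ⟨(hline ℓ).continuousWithinAt.congr_of_mem hl ⟨hq, by linarith, le_rfl⟩,
      (hline k).continuousWithinAt.congr_of_mem hr ⟨hq, le_rfl, by linarith⟩⟩
  rwa [← inter_union_distrib_left, Icc_union_Icc_eq_Icc (by linarith) (by linarith),
    continuousWithinAt_inter (Icc_mem_nhds (by linarith) (by linarith))] at hlr

lemma monotoneOn_apply (hP : IsNSystem n I P) (i : Fin n) : MonotoneOn (fun t => P t i) I := by
  refine monotoneOn_of_continuousOn_of_forall_right hP.ordConnected
    ((continuous_apply i).comp_continuousOn hP.continuousOn) fun x hx => ?_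
  obtain ⟨-, ε, hε, k, -, -, hr, -⟩ := hP.2.2.2 x hx
  refine ⟨ε, hε, fun t ht => ?_⟩
  rw [hr t ht, Pi.add_apply, Pi.smul_apply, smul_eq_mul, le_add_iff_nonneg_right]
  exact mul_nonneg (sub_nonneg.2 ht.2.1) (eVec_nonneg _ _ _)

lemma apply_sub_apply_le (hP : IsNSystem n I P) {a b : ℝ} (ha : a ∈ I) (hb : b ∈ I)
    (hab : a ≤ b) (i : Fin n) : P b i - P a i ≤ b - a := by
  have hsum : ∑ j, (P b j - P a j) = b - a := by
    rw [Finset.sum_sub_distrib, hP.sum_eq ha, hP.sum_eq hb]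
  exact hsum ▸ Finset.single_le_sum (fun j _ => sub_nonneg.2 (hP.monotoneOn_apply j ha hb hab))
    (Finset.mem_univ i)

lemma iotaEmb_comp (hP : IsNSystem n I P) :
    IsNSystem (n + 1) I (fun q => iotaEmb (n + 1) (P q)) := by
  obtain ⟨hI0, hIoc, hIint, hsys⟩ := hP
  refine ⟨hI0, hIoc, hIint, fun q hq => ?_⟩
  obtain ⟨⟨hnonneg, hmono, hsum⟩, ε, hε, k, ℓ, hl, hr, hS3⟩ := hsys q hq
  simp only [iotaEmb_succ]
  have hslope (t : ℝ) (j : Fin n) (h : P t = P q + (t - q) • eVec n j) :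
      (Fin.cons 0 (P t) : RVec (n + 1)) = Fin.cons 0 (P q) + (t - q) • eVec (n + 1) j.succ := by
    ext i
    induction i using Fin.cases <;> simp [h, Fin.val_succ, eVec_succ]
  refine ⟨⟨fun i => ?_, fun i j hij => ?_, by simp [Fin.sum_cons, hsum]⟩,
    ε, hε, k.succ, ℓ.succ, fun t ht => hslope t ℓ (hl t ht), fun t ht => hslope t k (hr t ht),
    fun hqI hlk i hli hik => ?_⟩
  · induction i using Fin.cases <;> simp [hnonneg]
  · induction i using Fin.cases with
    | zero => induction j using Fin.cases <;> simp [hnonneg]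
    | succ i =>
      induction j using Fin.cases with
      | zero => exact absurd hij (by simp)
      | succ j => simpa using hmono (Fin.succ_le_succ_iff.1 hij)
  · induction i using Fin.cases with
    | zero => exact absurd hli (by simp)
    | succ i =>
      simpa using hS3 hqI (Fin.succ_lt_succ_iff.1 hlk) i (Fin.succ_le_succ_iff.1 hli)
        (Fin.succ_le_succ_iff.1 hik)

end IsNSystem

def tailSum {n : ℕ} (P : ℝ → RVec (n + 1)) (t : ℝ) : ℝ := t - P t 0

/-- The system `R` with `R(tailSum P t) = (P₂(t), …, P_{n+1}(t))`, read off at the largest `t`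
of each fiber of `tailSum P`. -/
def reduceSys {n : ℕ} (I : Set ℝ) (P : ℝ → RVec (n + 1)) (s : ℝ) : RVec n :=
  Fin.tail (P (sSup {t ∈ I | tailSum P t = s}))

section Reduction

variable {n : ℕ} {I : Set ℝ} {P : ℝ → RVec (n + 1)}

lemma tailSum_of_slope_zero {a b : ℝ}
    (h : P b = P a + (b - a) • eVec (n + 1) (0 : Fin (n + 1))) : tailSum P b = tailSum P a := by
  simp only [tailSum, h, Pi.add_apply, Pi.smul_apply, smul_eq_mul, Fin.val_zero, eVec_zero,
    Fin.cons_zero]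
  ring

lemma tailSum_of_slope_succ {a b : ℝ} {k : Fin n}
    (h : P b = P a + (b - a) • eVec (n + 1) k.succ) : tailSum P b = tailSum P a + (b - a) := by
  simp [tailSum, h, Fin.val_succ, eVec_succ]

lemma tendsto_tailSum {M : ℝ} (hM : ∀ t ∈ I, P t 0 ≤ M) :
    Tendsto (tailSum P) (atTop ⊓ 𝓟 I) atTop := by
  refine tendsto_atTop_mono' _ ?_ ((tendsto_atTop_add_const_right _ (-M) tendsto_id).mono_left
    inf_le_left)
  filter_upwards [mem_inf_of_right (mem_principal_self I)] with t ht
  have := hM t ht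
  simp only [tailSum, id]
  linarith

lemma not_bddAbove_image_tailSum (hub : ¬BddAbove I) {M : ℝ}
    (hM : ∀ t ∈ I, P t 0 ≤ M) : ¬BddAbove (tailSum P '' I) := by
  rintro ⟨u, hu⟩
  obtain ⟨t, ht, hut⟩ := not_bddAbove_iff.1 hub (u + M)
  have := hu (mem_image_of_mem _ ht)
  have := hM t ht
  unfold tailSum at *
  linarith

namespace IsNSystem

lemma tailSum_eq_sum (hP : IsNSystem (n + 1) I P) {t : ℝ} (ht : t ∈ I) :
    tailSum P t = ∑ i : Fin n, P t i.succ := by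
  have := hP.sum_eq ht
  rw [Fin.sum_univ_succ] at this
  unfold tailSum
  linarith

lemma tailSum_nonneg (hP : IsNSystem (n + 1) I P) {t : ℝ} (ht : t ∈ I) : 0 ≤ tailSum P t :=
  hP.tailSum_eq_sum ht ▸ Finset.sum_nonneg fun _ _ => hP.nonneg ht _

lemma monotoneOn_tailSum (hP : IsNSystem (n + 1) I P) : MonotoneOn (tailSum P) I :=
  fun a ha b hb hab => by
    have := hP.apply_sub_apply_le ha hb hab 0
    unfold tailSum
    linarith

lemma continuousOn_tailSum (hP : IsNSystem (n + 1) I P) : ContinuousOn (tailSum P) I :=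
  continuousOn_id.sub ((continuous_apply 0).comp_continuousOn hP.continuousOn)

lemma tail_eq_of_tailSum_eq (hP : IsNSystem (n + 1) I P) {a b : ℝ} (ha : a ∈ I) (hb : b ∈ I)
    (hab : a ≤ b) (h : tailSum P a = tailSum P b) : Fin.tail (P a) = Fin.tail (P b) := by
  have hsum : ∑ i : Fin n, (P b i.succ - P a i.succ) = 0 := by
    rw [Finset.sum_sub_distrib, ← hP.tailSum_eq_sum hb, ← hP.tailSum_eq_sum ha, h, sub_self]
  ext i
  have := (Finset.sum_eq_zero_iff_of_nonneg fun j _ =>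
    sub_nonneg.2 (hP.monotoneOn_apply j.succ ha hb hab)).1 hsum i (Finset.mem_univ i)
  simp only [Fin.tail]
  linarith

lemma isGreatest_fiber (hP : IsNSystem (n + 1) I P) (hub : ¬BddAbove I) {M : ℝ}
    (hM : ∀ t ∈ I, P t 0 ≤ M) {s : ℝ} (hs : s ∈ tailSum P '' I) :
    IsGreatest {t ∈ I | tailSum P t = s} (sSup {t ∈ I | tailSum P t = s}) := by
  obtain ⟨t₀, ht₀, rfl⟩ := hs
  have hbdd : BddAbove {t ∈ I | tailSum P t = tailSum P t₀} :=
    ⟨tailSum P t₀ + M, fun t ht => by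
      have := hM t ht.1
      simp only [tailSum, mem_sep_iff] at ht ⊢
      linarith [ht.2]⟩
  have hmem := hP.ordConnected.Ici_subset_of_not_bddAbove hub ht₀ (le_csSup hbdd ⟨ht₀, rfl⟩)
  exact ⟨⟨hmem, hP.continuousOn_tailSum.apply_eq_of_mem_closure_fiber hmem
    (csSup_mem_closure ⟨t₀, ht₀, rfl⟩ hbdd)⟩, fun t ht => le_csSup hbdd ht⟩

lemma isLeast_fiber (hP : IsNSystem (n + 1) I P) {s t₀ : ℝ} (hs : s ∈ tailSum P '' I)
    (ht₀ : t₀ ∈ I) (hlt : tailSum P t₀ < s) :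
    IsLeast {t ∈ I | tailSum P t = s} (sInf {t ∈ I | tailSum P t = s}) ∧
      t₀ < sInf {t ∈ I | tailSum P t = s} := by
  obtain ⟨t₁, ht₁, rfl⟩ := hs
  have hlow : t₀ ∈ lowerBounds {t ∈ I | tailSum P t = tailSum P t₁} := fun t ht =>
    le_of_not_gt fun htt₀ => (hP.monotoneOn_tailSum ht.1 ht₀ htt₀.le).not_gt (ht.2 ▸ hlt)
  have hbdd : BddBelow {t ∈ I | tailSum P t = tailSum P t₁} := ⟨t₀, hlow⟩
  have hle : t₀ ≤ sInf {t ∈ I | tailSum P t = tailSum P t₁} := le_csInf ⟨t₁, ht₁, rfl⟩ hlow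
  have hmem := hP.ordConnected.out ht₀ ht₁ ⟨hle, csInf_le hbdd ⟨ht₁, rfl⟩⟩
  have heq := hP.continuousOn_tailSum.apply_eq_of_mem_closure_fiber hmem
    (csInf_mem_closure ⟨t₁, ht₁, rfl⟩ hbdd)
  refine ⟨⟨⟨hmem, heq⟩, fun t ht => csInf_le hbdd ht⟩, hle.lt_of_ne ?_⟩
  rintro h
  rw [← h] at heq
  exact hlt.ne heq

lemma reduceSys_tailSum (hP : IsNSystem (n + 1) I P) (hub : ¬BddAbove I) {M : ℝ}
    (hM : ∀ t ∈ I, P t 0 ≤ M) {t : ℝ} (ht : t ∈ I) :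
    reduceSys I P (tailSum P t) = Fin.tail (P t) := by
  have hmax := hP.isGreatest_fiber hub hM (mem_image_of_mem _ ht)
  exact (hP.tail_eq_of_tailSum_eq ht hmax.1.1 (hmax.2 ⟨ht, rfl⟩) hmax.1.2.symm).symm

lemma reduceSys_add_of_slope_succ (hP : IsNSystem (n + 1) I P) (hub : ¬BddAbove I) {M : ℝ}
    (hM : ∀ t ∈ I, P t 0 ≤ M) {a d : ℝ} {k : Fin n} (ha : a ∈ I) (had : a + d ∈ I)
    (h : P (a + d) = P a + d • eVec (n + 1) k.succ) :
    reduceSys I P (tailSum P a + d) = reduceSys I P (tailSum P a) + d • eVec n k := by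
  have hsum := tailSum_of_slope_succ (a := a) (b := a + d) (by rwa [add_sub_cancel_left])
  rw [add_sub_cancel_left] at hsum
  rw [← hsum, hP.reduceSys_tailSum hub hM had, hP.reduceSys_tailSum hub hM ha, h]
  ext i
  simp [Fin.tail, Fin.val_succ, eVec_succ]

lemma exists_succ_of_right_slope_of_isGreatest (hP : IsNSystem (n + 1) I P)
    (hub : ¬BddAbove I) {s τ ε : ℝ} {k : Fin (n + 1)}
    (hτ : IsGreatest {t ∈ I | tailSum P t = s} τ) (hε : 0 < ε)
    (hr : ∀ t ∈ I ∩ Icc τ (τ + ε), P t = P τ + (t - τ) • eVec (n + 1) k) :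
    ∃ k' : Fin n, k = k'.succ := by
  refine (Fin.eq_zero_or_eq_succ k).resolve_left ?_
  rintro rfl
  have hmem : τ + ε ∈ I ∩ Icc τ (τ + ε) :=
    ⟨hP.ordConnected.Ici_subset_of_not_bddAbove hub hτ.1.1 (le_add_of_nonneg_right hε.le),
      le_add_of_nonneg_right hε.le, le_rfl⟩
  have := hτ.2 ⟨hmem.1, (tailSum_of_slope_zero (hr _ hmem)).trans hτ.1.2⟩
  linarith

lemma exists_succ_of_left_slope_of_isLeast (hP : IsNSystem (n + 1) I P) {s b t₀ ε : ℝ}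
    {ℓ : Fin (n + 1)} (hb : IsLeast {t ∈ I | tailSum P t = s} b) (ht₀ : t₀ ∈ I) (ht₀b : t₀ < b)
    (hε : 0 < ε) (hl : ∀ t ∈ I ∩ Icc (b - ε) b, P t = P b + (t - b) • eVec (n + 1) ℓ) :
    ∃ ℓ' : Fin n, ℓ = ℓ'.succ := by
  refine (Fin.eq_zero_or_eq_succ ℓ).resolve_left ?_
  rintro rfl
  have hlt : max t₀ (b - ε) < b := max_lt ht₀b (by linarith)
  have hmem : max t₀ (b - ε) ∈ I ∩ Icc (b - ε) b :=
    ⟨hP.ordConnected.out ht₀ hb.1.1 ⟨le_max_left _ _, hlt.le⟩, le_max_right _ _, hlt.le⟩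
  have := hb.2 ⟨hmem.1, (tailSum_of_slope_zero (hl _ hmem)).trans hb.1.2⟩
  linarith

lemma left_slope_eq_zero_of_lt (hP : IsNSystem (n + 1) I P) {s b τ ε : ℝ} {ℓ : Fin (n + 1)}
    (hb : b ∈ {t ∈ I | tailSum P t = s}) (hτ : τ ∈ {t ∈ I | tailSum P t = s}) (hbτ : b < τ)
    (hε : 0 < ε) (hl : ∀ t ∈ I ∩ Icc (τ - ε) τ, P t = P τ + (t - τ) • eVec (n + 1) ℓ) :
    ℓ = 0 := by
  by_contra hℓ
  obtain ⟨j, rfl⟩ := (Fin.eq_zero_or_eq_succ ℓ).resolve_left hℓ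
  have hlt : max b (τ - ε) < τ := max_lt hbτ (by linarith)
  have hmem : max b (τ - ε) ∈ I ∩ Icc (τ - ε) τ :=
    ⟨hP.ordConnected.out hb.1 hτ.1 ⟨le_max_left _ _, hlt.le⟩, le_max_right _ _, hlt.le⟩
  have hmono := hP.monotoneOn_tailSum hb.1 hmem.1 (le_max_left _ _)
  rw [hb.2, tailSum_of_slope_succ (hl _ hmem), hτ.2] at hmono
  linarith

lemma reduceSys_of_slope_succ (hP : IsNSystem (n + 1) I P) (hub : ¬BddAbove I) {M : ℝ}
    (hM : ∀ t ∈ I, P t 0 ≤ M) {p s t : ℝ} {k : Fin n} (hp : p ∈ I) (hps : tailSum P p = s)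
    (hpt : p + (t - s) ∈ I) (h : P (p + (t - s)) = P p + (p + (t - s) - p) • eVec (n + 1) k.succ) :
    reduceSys I P t = reduceSys I P s + (t - s) • eVec n k := by
  rw [add_sub_cancel_left] at h
  have := hP.reduceSys_add_of_slope_succ hub hM hp hpt h
  rwa [hps, add_sub_cancel] at this

/-- The left slope of `reduceSys I P` at `s` is read off at the smallest point `b` of the fiber
of `s`. If `b` is smaller than the largest point `τ`, then `P` moves along `e₁` just before `τ`,
so in both cases (S3) for `P` at `τ` gives (S3) for the reduced system. -/
lemma exists_left_slope_reduceSys (hP : IsNSystem (n + 1) I P) (hub : ¬BddAbove I) {M : ℝ}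
    (hM : ∀ t ∈ I, P t 0 ≤ M) {s τ t₀ ε₁ : ℝ} {ℓ₁ : Fin (n + 1)} {k : Fin n}
    (hτ : IsGreatest {t ∈ I | tailSum P t = s} τ) (ht₀ : t₀ ∈ I) (ht₀s : tailSum P t₀ < s)
    (hε₁ : 0 < ε₁) (hl₁ : ∀ t ∈ I ∩ Icc (τ - ε₁) τ, P t = P τ + (t - τ) • eVec (n + 1) ℓ₁)
    (hS3 : τ ∈ interior I → ℓ₁ < k.succ → ∀ i, ℓ₁ ≤ i → i ≤ k.succ → P τ i = P τ ℓ₁) :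
    ∃ ε > (0 : ℝ), ∃ ℓ : Fin n,
      (∀ t ∈ Icc (s - ε) s, reduceSys I P t = reduceSys I P s + (t - s) • eVec n ℓ) ∧
      (ℓ < k → ∀ i : Fin n, ℓ ≤ i → i ≤ k → reduceSys I P s i = reduceSys I P s ℓ) := by
  have hRs : reduceSys I P s = Fin.tail (P τ) := hτ.1.2 ▸ hP.reduceSys_tailSum hub hM hτ.1.1
  obtain ⟨hmin, ht₀b⟩ := hP.isLeast_fiber ⟨τ, hτ.1⟩ ht₀ ht₀s
  set b := sInf {t ∈ I | tailSum P t = s}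
  have hray : Ici t₀ ⊆ I := hP.ordConnected.Ici_subset_of_not_bddAbove hub ht₀
  have hτint : τ ∈ interior I := interior_maximal (Ioi_subset_Ici_self.trans hray)
    isOpen_Ioi (ht₀b.trans_le (hmin.2 hτ.1))
  have hleft_of {p ε : ℝ} {ℓ : Fin n} (hp : p ∈ {t ∈ I | tailSum P t = s}) (hpε : t₀ ≤ p - ε)
      (hl : ∀ t ∈ I ∩ Icc (p - ε) p, P t = P p + (t - p) • eVec (n + 1) ℓ.succ)
      (t : ℝ) (ht : t ∈ Icc (s - ε) s) :
      reduceSys I P t = reduceSys I P s + (t - s) • eVec n ℓ := by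
    have hmem : p + (t - s) ∈ I ∩ Icc (p - ε) p :=
      ⟨hray (mem_Ici.2 (by linarith [ht.1])), by linarith [ht.1], by linarith [ht.2]⟩
    exact hP.reduceSys_of_slope_succ hub hM hp.1 hp.2 hmem.1 (hl _ hmem)
  rcases (hmin.2 hτ.1).eq_or_lt with hbτ | hbτ
  · obtain ⟨ℓ, rfl⟩ := hP.exists_succ_of_left_slope_of_isLeast (hbτ ▸ hmin) ht₀
      (hbτ ▸ ht₀b) hε₁ hl₁
    refine ⟨min ε₁ (τ - t₀), lt_min hε₁ (by linarith [hbτ ▸ ht₀b]), ℓ,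
      hleft_of hτ.1 (by linarith [min_le_right ε₁ (τ - t₀)])
        fun t ht => hl₁ t ⟨ht.1, by linarith [ht.2.1, min_le_left ε₁ (τ - t₀)], ht.2.2⟩,
      fun hlk i hli hik => ?_⟩
    rw [hRs]
    exact hS3 hτint (Fin.succ_lt_succ_iff.2 hlk) i.succ (Fin.succ_le_succ_iff.2 hli)
      (Fin.succ_le_succ_iff.2 hik)
  · obtain ⟨-, ε₂, hε₂, -, ℓ₂, hl₂, -, -⟩ := hP.2.2.2 b hmin.1.1
    obtain ⟨ℓ, rfl⟩ := hP.exists_succ_of_left_slope_of_isLeast hmin ht₀ ht₀b hε₂ hl₂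
    have hℓ₁ : ℓ₁ = 0 := hP.left_slope_eq_zero_of_lt hmin.1 hτ.1 hbτ hε₁ hl₁
    refine ⟨min ε₂ (b - t₀), lt_min hε₂ (by linarith), ℓ,
      hleft_of hmin.1 (by linarith [min_le_right ε₂ (b - t₀)])
        fun t ht => hl₂ t ⟨ht.1, by linarith [ht.2.1, min_le_left ε₂ (b - t₀)], ht.2.2⟩,
      fun hlk i _ hik => ?_⟩
    have hS3τ := hS3 hτint (hℓ₁ ▸ Fin.succ_pos k)
    rw [hℓ₁] at hS3τ
    rw [hRs]
    exact (hS3τ i.succ (Fin.zero_le _) (Fin.succ_le_succ_iff.2 hik)).trans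
      (hS3τ ℓ.succ (Fin.zero_le _) (Fin.succ_le_succ_iff.2 hlk.le)).symm

/-- The right slope of `reduceSys I P` at `s` is read off at the largest point `τ` of the fiber
of `s`, where `P` has to leave the fiber along some `e_{k+1}`. -/
lemma exists_slopes_reduceSys (hP : IsNSystem (n + 1) I P) (hub : ¬BddAbove I) {M : ℝ}
    (hM : ∀ t ∈ I, P t 0 ≤ M) {s : ℝ} (hs : s ∈ tailSum P '' I) :
    ∃ ε > (0 : ℝ), ∃ k ℓ : Fin n,
      (∀ t ∈ tailSum P '' I ∩ Icc (s - ε) s,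
        reduceSys I P t = reduceSys I P s + (t - s) • eVec n ℓ) ∧
      (∀ t ∈ tailSum P '' I ∩ Icc s (s + ε),
        reduceSys I P t = reduceSys I P s + (t - s) • eVec n k) ∧
      (s ∈ interior (tailSum P '' I) → ℓ < k → ∀ i : Fin n, ℓ ≤ i → i ≤ k →
        reduceSys I P s i = reduceSys I P s ℓ) := by
  have hmax := hP.isGreatest_fiber hub hM hs
  set τ := sSup {t ∈ I | tailSum P t = s}
  obtain ⟨-, ε₁, hε₁, k₁, ℓ₁, hl₁, hr₁, hS3⟩ := hP.2.2.2 τ hmax.1.1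
  obtain ⟨k, rfl⟩ := hP.exists_succ_of_right_slope_of_isGreatest hub hmax hε₁ hr₁
  have hright (t : ℝ) (ht : t ∈ Icc s (s + ε₁)) :
      reduceSys I P t = reduceSys I P s + (t - s) • eVec n k := by
    have hmem : τ + (t - s) ∈ I ∩ Icc τ (τ + ε₁) :=
      ⟨hP.ordConnected.Ici_subset_of_not_bddAbove hub hmax.1.1 (mem_Ici.2 (by linarith [ht.1])),
        by linarith [ht.1], by linarith [ht.2]⟩
    exact hP.reduceSys_of_slope_succ hub hM hmax.1.1 hmax.1.2 hmem.1 (hr₁ _ hmem)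
  by_cases hbelow : ∃ t₀ ∈ I, tailSum P t₀ < s
  · obtain ⟨t₀, ht₀, ht₀s⟩ := hbelow
    obtain ⟨ε₂, hε₂, ℓ, hleft, hS3'⟩ :=
      hP.exists_left_slope_reduceSys hub hM hmax ht₀ ht₀s hε₁ hl₁ hS3
    exact ⟨min ε₁ ε₂, lt_min hε₁ hε₂, k, ℓ,
      fun t ht => hleft t ⟨by linarith [ht.2.1, min_le_right ε₁ ε₂], ht.2.2⟩,
      fun t ht => hright t ⟨ht.2.1, by linarith [ht.2.2, min_le_left ε₁ ε₂]⟩, fun _ => hS3'⟩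
  · push Not at hbelow
    refine ⟨ε₁, hε₁, k, k, ?_, fun t ht => hright t ht.2, fun _ h => absurd h (lt_irrefl k)⟩
    rintro _ ⟨⟨t, ht, rfl⟩, -, hts⟩
    rw [le_antisymm hts (hbelow t ht), sub_self, zero_smul, add_zero]

lemma isNSystem_reduceSys (hP : IsNSystem (n + 1) I P) (hub : ¬BddAbove I) {M : ℝ}
    (hM : ∀ t ∈ I, P t 0 ≤ M) : IsNSystem n (tailSum P '' I) (reduceSys I P) := by
  have hconn : (tailSum P '' I).OrdConnected :=
    (hP.ordConnected.isPreconnected.image _ hP.continuousOn_tailSum).ordConnected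
  obtain ⟨s₀, hs₀⟩ := (hP.2.2.1.mono interior_subset).image (tailSum P)
  refine ⟨?_, hconn, ⟨s₀ + 1, interior_maximal (Ioi_subset_Ici_self.trans
    (hconn.Ici_subset_of_not_bddAbove (not_bddAbove_image_tailSum hub hM) hs₀)) isOpen_Ioi
      (lt_add_one s₀)⟩, fun s hs => ⟨?_, hP.exists_slopes_reduceSys hub hM hs⟩⟩
  · rintro _ ⟨t, ht, rfl⟩
    exact hP.tailSum_nonneg ht
  · obtain ⟨t, ht, rfl⟩ := hs
    rw [hP.reduceSys_tailSum hub hM ht]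
    exact ⟨fun i => hP.nonneg ht _, fun i j hij => hP.monotone ht (Fin.succ_le_succ_iff.2 hij),
      (hP.tailSum_eq_sum ht).symm⟩

lemma tendsto_head_div_tailSum (hP : IsNSystem (n + 1) I P) {M : ℝ} (hM : ∀ t ∈ I, P t 0 ≤ M) :
    Tendsto (fun t => P t 0 / tailSum P t) (atTop ⊓ 𝓟 I) (𝓝 0) := by
  have hpos := (tendsto_tailSum hM).eventually_gt_atTop 0
  have hI : ∀ᶠ t in atTop ⊓ 𝓟 I, t ∈ I := mem_inf_of_right (mem_principal_self I)
  refine tendsto_of_tendsto_of_tendsto_of_le_of_le' tendsto_const_nhds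
    ((tendsto_const_nhds (x := M)).div_atTop (tendsto_tailSum hM)) ?_ ?_
  · filter_upwards [hpos, hI] with t hφ ht
    exact div_nonneg (hP.nonneg ht 0) hφ.le
  · filter_upwards [hpos, hI] with t hφ ht
    exact div_le_div_of_nonneg_right (hM t ht) hφ.le

lemma iotaEmb_reduceSys_tailSum (hP : IsNSystem (n + 1) I P) (hub : ¬BddAbove I) {M : ℝ}
    (hM : ∀ t ∈ I, P t 0 ≤ M) {t : ℝ} (ht : t ∈ I) :
    iotaEmb (n + 1) (reduceSys I P (tailSum P t)) = P t - P t 0 • eVec (n + 1) 0 := by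
  rw [hP.reduceSys_tailSum hub hM ht, iotaEmb_succ, eVec_zero]
  conv_rhs => rw [← Fin.cons_self_tail (P t)]
  ext i
  induction i using Fin.cases <;> simp [Fin.tail]

lemma tendsto_reduceSys_sub (hP : IsNSystem (n + 1) I P) (hub : ¬BddAbove I) {M : ℝ}
    (hM : ∀ t ∈ I, P t 0 ≤ M) :
    Tendsto (fun t => (tailSum P t)⁻¹ • iotaEmb (n + 1) (reduceSys I P (tailSum P t)) - t⁻¹ • P t)
      (atTop ⊓ 𝓟 I) (𝓝 0) := by
  have hI : ∀ᶠ t in atTop ⊓ 𝓟 I, t ∈ I := mem_inf_of_right (mem_principal_self I)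
  refine ((hP.tendsto_head_div_tailSum hM).zero_smul_isBoundedUnder_le
    (g := fun t => t⁻¹ • P t - eVec (n + 1) 0)
    (isBoundedUnder_of_eventually_le (a := 2) ?_)).congr' ?_
  · filter_upwards [hI] with t ht
    exact (norm_sub_le _ _).trans
      (by linarith [hP.norm_inv_smul_le_one ht, norm_eVec_le_one (n + 1) 0])
  · filter_upwards [hI, (tendsto_tailSum hM).eventually_gt_atTop 0] with t ht hφ
    have ht0 : 0 < t := hφ.trans_le (by unfold tailSum; linarith [hP.nonneg ht 0])
    rw [hP.iotaEmb_reduceSys_tailSum hub hM ht]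
    ext i
    simp only [tailSum] at hφ ⊢
    simp only [Pi.sub_apply, Pi.smul_apply, smul_eq_mul]
    field_simp
    ring

/-- `P(t)/t` and `ι(R(tailSum t))/tailSum t` are bounded and asymptotic to each other. -/
lemma muT_reduceSys (hP : IsNSystem (n + 1) I P) (hub : ¬BddAbove I) {M : ℝ}
    (hM : ∀ t ∈ I, P t 0 ≤ M) {m : ℕ} {T : RVec (n + 1) → RVec m} (hT : IsLinearMap ℝ T) :
    muT n m (fun x => T (iotaEmb (n + 1) x)) (tailSum P '' I) (reduceSys I P) =
      muT (n + 1) m T I P := by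
  have := neBot_atTop_inf_principal hub
  let L : RVec (n + 1) →L[ℝ] RVec m := LinearMap.toContinuousLinearMap (IsLinearMap.mk' T hT)
  have hratio (x : RVec (n + 1)) (q : ℝ) (j : Fin m) : T x j / q = L (q⁻¹ • x) j := by
    simp [L, div_eq_inv_mul]
  ext j
  simp only [muT, hratio]
  rw [← hP.monotoneOn_tailSum.map_atTop_inf_principal hub (tendsto_tailSum hM), ← liminf_comp]
  have hbdd : ∀ᶠ t in atTop ⊓ 𝓟 I, |L (t⁻¹ • P t) j| ≤ ‖L‖ := by
    filter_upwards [mem_inf_of_right (mem_principal_self I)] with t ht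
    calc |L (t⁻¹ • P t) j| ≤ ‖L (t⁻¹ • P t)‖ := by
          simpa only [Real.norm_eq_abs] using norm_le_pi_norm (L (t⁻¹ • P t)) j
      _ ≤ ‖L‖ * ‖t⁻¹ • P t‖ := L.le_opNorm _
      _ ≤ ‖L‖ := mul_le_of_le_one_right (norm_nonneg _) (hP.norm_inv_smul_le_one ht)
  obtain ⟨hbdd_le, hbdd_ge⟩ := isBoundedUnder_le_abs.1 (isBoundedUnder_of_eventually_le hbdd)
  refine liminf_eq_of_tendsto_sub hbdd_le hbdd_ge ?_
  have := (((continuous_apply j).comp L.continuous).tendsto 0).comp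
    (hP.tendsto_reduceSys_sub hub hM)
  simpa only [Function.comp_def, map_sub, map_zero, Pi.sub_apply, Pi.zero_apply] using this

end IsNSystem

end Reduction

lemma isLinearMap_iotaEmb (n : ℕ) : IsLinearMap ℝ (iotaEmb (n + 1)) := by
  constructor <;> intros <;> ext i <;> induction i using Fin.cases <;> simp [iotaEmb_succ]

lemma IsProperSys.not_bddAbove {n : ℕ} {I : Set ℝ} {P : ℝ → RVec (n + 1)}
    (hP : IsProperSys (n + 1) I P) : ¬BddAbove I := by
  rintro ⟨u, hu⟩
  obtain ⟨q, hq, hu'⟩ := hP.2 u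
  linarith [hu' 0, hP.1.apply_le hq 0, hu hq]

lemma IsNSystem.eq_smul_one {I : Set ℝ} {R : ℝ → RVec 1} (hR : IsNSystem 1 I R) {q : ℝ}
    (hq : q ∈ I) : R q = q • 1 := by
  ext i
  fin_cases i
  simpa using hR.sum_eq hq

lemma isNSystem_smul_one : IsNSystem 1 (Ici 0) (fun q => q • 1) := by
  refine ⟨subset_rfl, ordConnected_Ici, ⟨1, by simp⟩, fun q hq => ⟨⟨fun i => by simpa using hq,
    fun _ _ _ => le_rfl, by simp⟩, 1, one_pos, 0, 0, fun t _ => ?_, fun t _ => ?_, by simp⟩⟩ <;>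
  · ext i
    fin_cases i
    simp [eVec]

lemma IsNSystem.muT_eq_apply_one {I : Set ℝ} {R : ℝ → RVec 1} (hR : IsNSystem 1 I R)
    (hub : ¬BddAbove I) {m : ℕ} {S : RVec 1 → RVec m} (hS : IsLinearMap ℝ S) :
    muT 1 m S I R = S 1 := by
  have := neBot_atTop_inf_principal hub
  ext j
  refine (liminf_congr ?_).trans (liminf_const _)
  filter_upwards [mem_inf_of_right (mem_principal_self I),
    (eventually_gt_atTop 0).filter_mono inf_le_left] with q hq hq0
  rw [hR.eq_smul_one hq, hS.map_smul, Pi.smul_apply, smul_eq_mul, mul_div_cancel_left₀ _ hq0.ne']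

lemma image_muT_one_eq_singleton {m : ℕ} {S : RVec 1 → RVec m} (hS : IsLinearMap ℝ S) :
    {y : RVec m | ∃ I R, IsNSystem 1 I R ∧ ¬BddAbove I ∧ muT 1 m S I R = y} = {S 1} := by
  refine eq_singleton_iff_unique_mem.2 ⟨⟨_, _, isNSystem_smul_one, not_bddAbove_Ici 0,
    isNSystem_smul_one.muT_eq_apply_one (not_bddAbove_Ici 0) hS⟩, ?_⟩
  rintro _ ⟨I, R, hR, hub, rfl⟩
  exact hR.muT_eq_apply_one hub hS

lemma image_muT_succ_eq_union {n m : ℕ} {T : RVec (n + 1) → RVec m} (hT : IsLinearMap ℝ T) :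
    {y : RVec m | ∃ I P, IsNSystem (n + 1) I P ∧ ¬BddAbove I ∧ muT (n + 1) m T I P = y} =
      {y : RVec m | ∃ I P, IsProperSys (n + 1) I P ∧ muT (n + 1) m T I P = y} ∪
        {y : RVec m | ∃ I R, IsNSystem n I R ∧ ¬BddAbove I ∧
          muT n m (fun x => T (iotaEmb (n + 1) x)) I R = y} := by
  ext y
  constructor
  · rintro ⟨I, P, hP, hub, rfl⟩
    by_cases hproper : ∀ M : ℝ, ∃ q ∈ I, ∀ i, M < P q i
    · exact Or.inl ⟨I, P, ⟨hP, hproper⟩, rfl⟩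
    push Not at hproper
    obtain ⟨M, hM⟩ := hproper
    have hM0 (t : ℝ) (ht : t ∈ I) : P t 0 ≤ M := by
      obtain ⟨i, hi⟩ := hM t ht
      exact (hP.monotone ht (Fin.zero_le i)).trans hi
    exact Or.inr ⟨_, _, hP.isNSystem_reduceSys hub hM0, not_bddAbove_image_tailSum hub hM0,
      hP.muT_reduceSys hub hM0 hT⟩
  · rintro (⟨I, P, hP, rfl⟩ | ⟨I, R, hR, hub, rfl⟩)
    · exact ⟨I, P, hP.1, hP.not_bddAbove, rfl⟩
    · exact ⟨I, _, hR.iotaEmb_comp, hub, rfl⟩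

theorem image_muT_decomposition_general (n m : ℕ)
    (T : RVec n → RVec m) (hT : IsLinearMap ℝ T) :
    (3 ≤ n →
      {y : RVec m | ∃ I P, IsNSystem n I P ∧ ¬ BddAbove I ∧ muT n m T I P = y}
        = {y : RVec m | ∃ I P, IsProperSys n I P ∧ muT n m T I P = y}
          ∪ {y : RVec m | ∃ I R, IsNSystem (n - 1) I R ∧ ¬ BddAbove I ∧
              muT (n - 1) m (fun x => T (iotaEmb n x)) I R = y}) ∧
    (n = 2 →
      {y : RVec m | ∃ I P, IsNSystem n I P ∧ ¬ BddAbove I ∧ muT n m T I P = y}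
        = {y : RVec m | ∃ I P, IsProperSys n I P ∧ muT n m T I P = y}
          ∪ {T (fun i => if (i : ℕ) = 0 then 0 else 1)}) := by
  refine ⟨fun hn => ?_, fun hn => ?_⟩
  · obtain ⟨k, rfl⟩ : ∃ k, n = k + 1 := ⟨n - 1, by omega⟩
    exact image_muT_succ_eq_union hT
  · subst hn
    have hS : IsLinearMap ℝ (fun x => T (iotaEmb (1 + 1) x)) :=
      ((IsLinearMap.mk' T hT).comp (IsLinearMap.mk' _ (isLinearMap_iotaEmb 1))).isLinear
    rw [image_muT_succ_eq_union hT, image_muT_one_eq_singleton hS]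
    congr 3

/-- **Lemma (image of `μ_T`).** Let `T : ℝ^n → ℝ^m` be linear.  If `n ≥ 3`, then
`Im(μ_T) = Im*(μ_T) ∪ Im(μ_{T∘ι})`, while if `n = 2` then
`Im(μ_T) = Im*(μ_T) ∪ {T(0,1)}`.  Here `Im(μ_T)` ranges over `n`-systems with
unbounded domain and `Im*(μ_T)` over proper `n`-systems. -/
theorem image_muT_decomposition (n m : ℕ) (hn : 2 ≤ n)
    (T : RVec n → RVec m) (hT : IsLinearMap ℝ T) :
    (3 ≤ n →
      {y : RVec m | ∃ I P, IsNSystem n I P ∧ ¬ BddAbove I ∧ muT n m T I P = y}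
        = {y : RVec m | ∃ I P, IsProperSys n I P ∧ muT n m T I P = y}
          ∪ {y : RVec m | ∃ I R, IsNSystem (n - 1) I R ∧ ¬ BddAbove I ∧
              muT (n - 1) m (fun x => T (iotaEmb n x)) I R = y}) ∧
    (n = 2 →
      {y : RVec m | ∃ I P, IsNSystem n I P ∧ ¬ BddAbove I ∧ muT n m T I P = y}
        = {y : RVec m | ∃ I P, IsProperSys n I P ∧ muT n m T I P = y}
          ∪ {T (fun i => if (i : ℕ) = 0 then 0 else 1)}) :=
  image_muT_decomposition_general n m T hT
end
end

section
/- Let n ≥ 2 and let P : [w_0, ∞) → ℝ^n be a proper n-system whose division numbers, enumerated in increasing order, are w_0 < w_1 < w_2 < ⋯. Suppose P is self-similar, with ρ > 1 such that P(ρq) = ρP(q) for every q ≥ w_0, and let s ≥ 1 be the index for which ρw_1 = w_{s+1}. Then K(P) is the convex hull of the finite set {w_1^{-1}P(w_1), …, w_s^{-1}P(w_s)}. -/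
open Filter Set Pointwise Topology

noncomputable section

/-!
Between consecutive division numbers `P` is affine, so for `t ∈ [w i, w (i+1)]` the point
`t⁻¹ P(t)` lies on the segment joining `(w i)⁻¹ P(w i)` and `(w (i+1))⁻¹ P(w (i+1))`.
Multiplication by `ρ` maps division numbers above `w₀` onto division numbers, so it shifts their
enumeration: `ρ w i = w (i + s)`. Hence `(w j)⁻¹ P(w j)` only takes the `s` values listed in the
statement, whose convex hull is compact and therefore contains every limit point `F(P)`.
Conversely `q⁻¹ P(q)` is constant along `q = ρ^m w i`, so these `s` points lie in `F(P)`.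
-/
section AffineWithSlope

variable {E : Type*} [AddCommGroup E] [Module ℝ E]

def AffineWithSlope (f : ℝ → E) (v : E) (s : Set ℝ) : Prop :=
  ∀ x ∈ s, ∀ y ∈ s, f y = f x + (y - x) • v

namespace AffineWithSlope

variable {f : ℝ → E} {u v : E} {s t : Set ℝ}

theorem of_eq_add_smul {q : ℝ} (h : ∀ y ∈ s, f y = f q + (y - q) • v) :
    AffineWithSlope f v s := by
  intro x hx y hy
  rw [h x hx, h y hy]
  module

theorem mono (h : AffineWithSlope f v t) (hst : s ⊆ t) : AffineWithSlope f v s :=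
  fun x hx y hy => h x (hst hx) y (hst hy)

theorem union {p : ℝ} (hs : AffineWithSlope f v s) (ht : AffineWithSlope f v t)
    (hps : p ∈ s) (hpt : p ∈ t) : AffineWithSlope f v (s ∪ t) :=
  of_eq_add_smul (q := p) fun y hy => hy.elim (hs p hps y) (ht p hpt y)

theorem Icc_union {a b c : ℝ} (hab : AffineWithSlope f v (Icc a b))
    (hbc : AffineWithSlope f v (Icc b c)) (h₁ : a ≤ b) (h₂ : b ≤ c) :
    AffineWithSlope f v (Icc a c) := by
  rw [← Icc_union_Icc_eq_Icc h₁ h₂]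
  exact hab.union hbc ⟨h₁, le_rfl⟩ ⟨le_rfl, h₂⟩

theorem slope_eq {x y : ℝ} (hu : AffineWithSlope f u s) (hv : AffineWithSlope f v s)
    (hx : x ∈ s) (hy : y ∈ s) (hxy : x ≠ y) : u = v :=
  smul_right_injective E (sub_ne_zero.2 hxy.symm)
    (add_left_cancel ((hu x hx y hy).symm.trans (hv x hx y hy)))

theorem Icc_of_Ico {a c m : ℝ} (h : AffineWithSlope f v (Ico a c))
    (hl : AffineWithSlope f u (Icc m c)) (ham : a ≤ m) (hmc : m < c) :
    u = v ∧ AffineWithSlope f v (Icc a c) := by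
  have hm : m ∈ Ico a c ∩ Icc m c := ⟨⟨ham, hmc⟩, le_rfl, hmc.le⟩
  have hmid : (m + c) / 2 ∈ Ico a c ∩ Icc m c :=
    ⟨⟨by linarith, by linarith⟩, by linarith, by linarith⟩
  have huv : u = v := (hl.mono inter_subset_right).slope_eq (h.mono inter_subset_left)
    hm hmid (by linarith)
  refine ⟨huv, (h.union (huv ▸ hl) hm.1 hm.2).mono fun x hx => ?_⟩
  rcases lt_or_ge x c with hxc | hxc
  · exact Or.inl ⟨hx.1, hxc⟩
  · exact Or.inr ⟨hmc.le.trans hxc, hx.2⟩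

theorem inv_smul_mem_segment {a b t : ℝ} (h : AffineWithSlope f v (Icc a b)) (ha : 0 < a)
    (ht : t ∈ Icc a b) : t⁻¹ • f t ∈ segment ℝ (a⁻¹ • f a) (b⁻¹ • f b) := by
  have hab : a ≤ b := ht.1.trans ht.2
  have key : ∀ x ∈ Icc a b, x⁻¹ • f x = x⁻¹ • (f a - a • v) + v := by
    intro x hx
    rw [h a ⟨le_rfl, hab⟩ x hx]
    linear_combination (norm := module) (inv_mul_cancel₀ (ha.trans_le hx.1).ne') • v
  obtain ⟨θa, θb, hθa, hθb, hθ, hcomb⟩ : t⁻¹ ∈ segment ℝ a⁻¹ b⁻¹ := by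
    rw [segment_symm, segment_eq_Icc (inv_anti₀ ha hab)]
    exact ⟨inv_anti₀ (ha.trans_le ht.1) ht.2, inv_anti₀ ha ht.1⟩
  refine ⟨θa, θb, hθa, hθb, hθ, ?_⟩
  rw [key a ⟨le_rfl, hab⟩, key b ⟨hab, le_rfl⟩, key t ht]
  simp only [smul_eq_mul] at hcomb
  linear_combination (norm := module) hcomb • (f a - a • v) + hθ • v

theorem image_mul_left_iff {ρ : ℝ} (hρ : ρ ≠ 0) (hf : ∀ x ∈ s, f (ρ * x) = ρ • f x) :
    AffineWithSlope f v ((ρ * ·) '' s) ↔ AffineWithSlope f v s := by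
  constructor
  · intro h x hx y hy
    apply smul_right_injective E hρ
    simp only
    rw [← hf y hy, h _ ⟨x, hx, rfl⟩ _ ⟨y, hy, rfl⟩, hf x hx]
    module
  · rintro h _ ⟨x, hx, rfl⟩ _ ⟨y, hy, rfl⟩
    simp only
    rw [hf x hx, hf y hy, h x hx y hy]
    module

end AffineWithSlope

end AffineWithSlope

section NSystem

variable {n : ℕ} {w₀ : ℝ} {P : ℝ → RVec n}

theorem IsNSystem.affineWithSlope_Icc (hP : IsNSystem n (Ici w₀) P) {a b : ℝ}
    (ha : w₀ ≤ a) (hab : a < b)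
    (hnd : ∀ t ∈ Ioo a b, ¬ IsDivisionNumber n (Ici w₀) P t) :
    ∃ v, AffineWithSlope P v (Icc a b) := by
  obtain ⟨ε₀, hε₀, k₀, -, -, hR₀, -⟩ := (hP.2.2.2 a ha).2
  set v := eVec n k₀
  set A := {c | c ≤ b ∧ AffineWithSlope P v (Icc a c)}
  have hbdd : BddAbove A := ⟨b, fun c hc => hc.1⟩
  have hA₀ : min b (a + ε₀) ∈ A := ⟨min_le_left _ _, .of_eq_add_smul fun t ht =>
    hR₀ t ⟨ha.trans ht.1, ht.1, ht.2.trans (min_le_right _ _)⟩⟩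
  set c := sSup A
  have hac : a < c := (lt_min hab (by linarith)).trans_le (le_csSup hbdd hA₀)
  have hcb : c ≤ b := csSup_le ⟨_, hA₀⟩ fun c hc => hc.1
  have hIco : AffineWithSlope P v (Ico a c) := by
    intro x hx y hy
    obtain ⟨c', hc'A, hc'⟩ := exists_lt_of_lt_csSup ⟨_, hA₀⟩ (max_lt hx.2 hy.2)
    exact hc'A.2 x ⟨hx.1, (le_max_left x y).trans hc'.le⟩ y ⟨hy.1, (le_max_right x y).trans hc'.le⟩
  obtain ⟨ε, hε, k, ℓ, hL, hR, -⟩ := (hP.2.2.2 c (ha.trans hac.le)).2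
  obtain ⟨hℓ, hIcc⟩ := hIco.Icc_of_Ico
    (.of_eq_add_smul fun t ht => hL t ⟨ha.trans ((le_max_left _ _).trans ht.1),
      (le_max_right _ _).trans ht.1, ht.2⟩)
    (le_max_left a (c - ε)) (max_lt hac (by linarith))
  refine ⟨v, ?_⟩
  rcases hcb.eq_or_lt with hcb | hcb
  · rwa [hcb] at hIcc
  -- `c < b` is impossible: `c` is not a division number, so `P` goes on with slope `v` past `c`.
  have hkℓ : k = ℓ := by
    by_contra hkℓ
    refine hnd c ⟨hac, hcb⟩ ⟨ha.trans hac.le, Or.inr ⟨?_, ε, hε, k, ℓ, hkℓ, hL, hR⟩⟩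
    rw [interior_Ici]
    exact ha.trans_lt hac
  have hright : AffineWithSlope P v (Icc c (min b (c + ε))) := by
    rw [← hℓ, ← hkℓ]
    exact .of_eq_add_smul fun t ht =>
      hR t ⟨ha.trans (hac.le.trans ht.1), ht.1, ht.2.trans (min_le_right _ _)⟩
  have hmem : min b (c + ε) ∈ A :=
    ⟨min_le_left _ _, hIcc.Icc_union hright hac.le (le_min hcb.le (by linarith))⟩
  exact absurd (le_csSup hbdd hmem) (not_le.2 (lt_min hcb (by linarith)))

theorem isDivisionNumber_Ici_iff {q : ℝ} (hq : w₀ < q) :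
    IsDivisionNumber n (Ici w₀) P q ↔ ∃ a b, w₀ ≤ a ∧ a < q ∧ q < b ∧
      ∃ k ℓ : Fin n, k ≠ ℓ ∧ AffineWithSlope P (eVec n ℓ) (Icc a q) ∧
        AffineWithSlope P (eVec n k) (Icc q b) := by
  constructor
  · rintro ⟨-, hfr | ⟨-, ε, hε, k, ℓ, hkℓ, hL, hR⟩⟩
    · rw [frontier_Ici] at hfr
      exact absurd hfr hq.ne'
    exact ⟨max w₀ (q - ε), q + ε, le_max_left _ _, max_lt hq (by linarith), by linarith, k, ℓ, hkℓ,
      .of_eq_add_smul fun t ht => hL t ⟨(le_max_left _ _).trans ht.1,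
        (le_max_right _ _).trans ht.1, ht.2⟩,
      .of_eq_add_smul fun t ht => hR t ⟨hq.le.trans ht.1, ht⟩⟩
  · rintro ⟨a, b, -, haq, hqb, k, ℓ, hkℓ, hL, hR⟩
    have hε₁ := min_le_left (q - a) (b - q)
    have hε₂ := min_le_right (q - a) (b - q)
    refine ⟨hq.le, Or.inr ⟨by rw [interior_Ici]; exact hq, min (q - a) (b - q),
      lt_min (by linarith) (by linarith), k, ℓ, hkℓ,
      fun t ht => hL q ⟨haq.le, le_rfl⟩ t ⟨by linarith [ht.2.1], ht.2.2⟩,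
      fun t ht => hR q ⟨le_rfl, hqb.le⟩ t ⟨ht.2.1, by linarith [ht.2.2]⟩⟩⟩

theorem isDivisionNumber_mul_iff {ρ q : ℝ} (hw₀_nonneg : 0 ≤ w₀) (hρ : 1 < ρ)
    (hss : ∀ q, w₀ ≤ q → P (ρ * q) = ρ • P q) (hq : w₀ < q) :
    IsDivisionNumber n (Ici w₀) P (ρ * q) ↔ IsDivisionNumber n (Ici w₀) P q := by
  have hρ₀ : 0 < ρ := by linarith
  have hscale : ∀ {v : RVec n} {x y : ℝ}, w₀ ≤ x → x ≤ y →
      (AffineWithSlope P v (Icc (ρ * x) (ρ * y)) ↔ AffineWithSlope P v (Icc x y)) := by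
    intro v x y hx hxy
    rw [← image_mul_left_Icc hρ₀.le hxy]
    exact AffineWithSlope.image_mul_left_iff hρ₀.ne' fun t ht => hss t (hx.trans ht.1)
  have hq_lt : q < ρ * q := lt_mul_of_one_lt_left (hw₀_nonneg.trans_lt hq) hρ
  rw [isDivisionNumber_Ici_iff (hq.trans hq_lt), isDivisionNumber_Ici_iff hq]
  constructor
  · rintro ⟨a, b, -, haq, hqb, k, ℓ, hkℓ, hL, hR⟩
    have ha' : a ≤ ρ * max w₀ (a / ρ) := (mul_div_cancel₀ a hρ₀.ne').symm.le.trans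
      (mul_le_mul_of_nonneg_left (le_max_right _ _) hρ₀.le)
    have ha'q : max w₀ (a / ρ) < q := max_lt hq ((div_lt_iff₀' hρ₀).2 haq)
    have hqb' : q < b / ρ := (lt_div_iff₀' hρ₀).2 hqb
    refine ⟨max w₀ (a / ρ), b / ρ, le_max_left _ _, ha'q, hqb', k, ℓ, hkℓ,
      (hscale (le_max_left _ _) ha'q.le).1 (hL.mono (Icc_subset_Icc_left ha')),
      (hscale hq.le hqb'.le).1 ?_⟩
    rwa [mul_div_cancel₀ _ hρ₀.ne']
  · rintro ⟨a, b, hwa, haq, hqb, k, ℓ, hkℓ, hL, hR⟩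
    exact ⟨ρ * a, ρ * b, hwa.trans (le_mul_of_one_le_left (hw₀_nonneg.trans hwa) hρ.le),
      mul_lt_mul_of_pos_left haq hρ₀, mul_lt_mul_of_pos_left hqb hρ₀, k, ℓ, hkℓ,
      (hscale hwa haq.le).2 hL, (hscale hq.le hqb.le).2 hR⟩

end NSystem

theorem OrderIso.apply_eq_add_of_strictMono {α : Type*} [LinearOrder α] {w : ℕ → α}
    (f : α ≃o α) (hw : StrictMono w) (hmaps : ∀ i, 1 ≤ i → ∃ j, f (w i) = w j)
    (hpre : ∀ x, w 0 < x → (∃ j, f x = w j) → ∃ i, x = w i)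
    {s : ℕ} (h₁ : f (w 1) = w (s + 1)) : ∀ i, 1 ≤ i → f (w i) = w (i + s) := by
  intro i hi
  induction i, hi using Nat.le_induction with
  | base => rw [h₁, add_comm]
  | succ i hi ih =>
    obtain ⟨m, hm⟩ := hmaps (i + 1) (by omega)
    have hlt : i + s < m := by
      rw [← hw.lt_iff_lt, ← ih, ← hm]
      exact f.strictMono (hw (Nat.lt_succ_self i))
    suffices ¬ i + s + 1 < m by rw [hm]; congr 1; omega
    intro hm'
    have hx : f (f.symm (w (i + s + 1))) = w (i + s + 1) := f.apply_symm_apply _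
    have h₁ : w i < f.symm (w (i + s + 1)) := by
      rw [← f.lt_iff_lt, hx, ih]
      exact hw (by omega)
    have h₂ : f.symm (w (i + s + 1)) < w (i + 1) := by
      rw [← f.lt_iff_lt, hx, hm]
      exact hw hm'
    obtain ⟨r, hr⟩ := hpre _ ((hw.monotone (Nat.zero_le i)).trans_lt h₁) ⟨_, hx⟩
    rw [hr, hw.lt_iff_lt] at h₁ h₂
    omega

theorem eq_pow_mul_of_mul_eq_shift {M : Type*} [Monoid M] {w : ℕ → M} {ρ : M} {s : ℕ}
    (h : ∀ i, 1 ≤ i → ρ * w i = w (i + s)) {i : ℕ} (hi : 1 ≤ i) (m : ℕ) :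
    w (i + m * s) = ρ ^ m * w i := by
  induction m with
  | zero => simp
  | succ m ih => rw [add_mul, one_mul, ← add_assoc, ← h _ (by omega), ih, pow_succ', mul_assoc]

theorem not_bddAbove_range_of_mul_eq_shift {w : ℕ → ℝ} {ρ : ℝ} {s : ℕ}
    (h : ∀ i, 1 ≤ i → ρ * w i = w (i + s)) (hρ : 1 < ρ) (hw₁ : 0 < w 1) :
    ¬ BddAbove (range w) := by
  rintro ⟨M, hM⟩
  obtain ⟨m, hm⟩ := pow_unbounded_of_one_lt (M / w 1) hρ
  have := hM ⟨1 + m * s, rfl⟩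
  rw [eq_pow_mul_of_mul_eq_shift h le_rfl, ← le_div_iff₀ hw₁] at this
  linarith

section SelfSimilar

variable {E : Type*} [AddCommGroup E] [Module ℝ E] {P : ℝ → E} {w₀ ρ : ℝ}

theorem map_pow_mul_of_map_mul (hw₀_nonneg : 0 ≤ w₀) (hρ : 1 ≤ ρ)
    (hss : ∀ q, w₀ ≤ q → P (ρ * q) = ρ • P q) (m : ℕ) {q : ℝ} (hq : w₀ ≤ q) :
    P (ρ ^ m * q) = ρ ^ m • P q := by
  induction m with
  | zero => simp
  | succ m ih =>
    have hmq : w₀ ≤ ρ ^ m * q :=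
      hq.trans (le_mul_of_one_le_left (hw₀_nonneg.trans hq) (one_le_pow₀ hρ))
    rw [pow_succ', mul_assoc, hss _ hmq, ih, smul_smul]

theorem inv_smul_map_pow_mul (hw₀_nonneg : 0 ≤ w₀) (hρ : 1 ≤ ρ)
    (hss : ∀ q, w₀ ≤ q → P (ρ * q) = ρ • P q) (m : ℕ) {q : ℝ} (hq : w₀ ≤ q) :
    (ρ ^ m * q)⁻¹ • P (ρ ^ m * q) = q⁻¹ • P q := by
  rw [map_pow_mul_of_map_mul hw₀_nonneg hρ hss m hq, smul_smul, mul_inv_rev, mul_assoc,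
    inv_mul_cancel₀ (pow_pos (by linarith) m).ne', mul_one]

theorem exists_inv_smul_eq_of_mul_eq_shift {w : ℕ → ℝ} {s : ℕ} (hw₀_nonneg : 0 ≤ w₀)
    (hρ : 1 ≤ ρ) (hss : ∀ q, w₀ ≤ q → P (ρ * q) = ρ • P q) (hw0 : w 0 = w₀) (hmono : StrictMono w)
    (hs : 1 ≤ s) (hshift : ∀ i, 1 ≤ i → ρ * w i = w (i + s)) {j : ℕ} (hj : 1 ≤ j) :
    ∃ r, 1 ≤ r ∧ r ≤ s ∧ (w j)⁻¹ • P (w j) = (w r)⁻¹ • P (w r) := by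
  have hr : (j - 1) % s < s := Nat.mod_lt _ hs
  refine ⟨(j - 1) % s + 1, le_add_self, hr, ?_⟩
  have hwj : w j = ρ ^ ((j - 1) / s) * w ((j - 1) % s + 1) := by
    rw [← eq_pow_mul_of_mul_eq_shift hshift le_add_self]
    have := Nat.div_add_mod' (j - 1) s
    congr 1
    omega
  rw [hwj, inv_smul_map_pow_mul hw₀_nonneg hρ hss _ (hw0 ▸ hmono.monotone (Nat.zero_le _))]

end SelfSimilar

theorem inv_smul_mem_FSet {n : ℕ} {P : ℝ → RVec n} {w₀ ρ q : ℝ} (hw₀_nonneg : 0 ≤ w₀)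
    (hρ : 1 < ρ) (hss : ∀ q, w₀ ≤ q → P (ρ * q) = ρ • P q) (hq : w₀ < q) :
    q⁻¹ • P q ∈ FSet n (Ici w₀) P := by
  have hq₀ : 0 < q := hw₀_nonneg.trans_lt hq
  refine ⟨fun m => ρ ^ m * q,
    fun m => hq.le.trans (le_mul_of_one_le_left hq₀.le (one_le_pow₀ hρ.le)),
    fun _ _ h => mul_lt_mul_of_pos_right (pow_lt_pow_right₀ hρ h) hq₀,
    (tendsto_pow_atTop_atTop_of_one_lt hρ).atTop_mul_const hq₀, ?_⟩
  simp only [inv_smul_map_pow_mul hw₀_nonneg hρ.le hss _ hq.le]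
  exact tendsto_const_nhds

theorem IsNSystem.inv_smul_mem_of_convex {n : ℕ} {P : ℝ → RVec n} {w₀ : ℝ} {w : ℕ → ℝ}
    {C : Set (RVec n)} (hP : IsNSystem n (Ici w₀) P) (hw0 : w 0 = w₀)
    (hmono : StrictMono w) (hall : ∀ q, IsDivisionNumber n (Ici w₀) P q → ∃ i, q = w i)
    (hunbdd : ¬ BddAbove (range w)) (hC : Convex ℝ C)
    (hwC : ∀ j, 1 ≤ j → (w j)⁻¹ • P (w j) ∈ C) {t : ℝ} (ht : w 1 ≤ t) : t⁻¹ • P t ∈ C := by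
  have hw₀_nonneg : 0 ≤ w₀ := hP.1 self_mem_Ici
  have ht₀ : t ∈ ⋃ i, Ico (w i) (w (Order.succ i)) := by
    rw [iUnion_Ico_map_succ_eq_Ici (fun i => hmono.monotone bot_le) hunbdd]
    exact (hmono.monotone zero_le_one).trans ht
  obtain ⟨i, hwi, hti⟩ : ∃ i, w i ≤ t ∧ t < w (i + 1) := by simpa using ht₀
  have hi : 1 ≤ i := by
    by_contra! hi
    obtain rfl : i = 0 := by omega
    exact hti.not_ge ht
  have hw₀i : w₀ < w i := hw0 ▸ hmono (by omega)
  obtain ⟨v, hv⟩ := hP.affineWithSlope_Icc hw₀i.le (hmono (Nat.lt_succ_self i)) fun u hu hu' => by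
    obtain ⟨r, rfl⟩ := hall u hu'
    have := hmono.lt_iff_lt.1 hu.1
    have := hmono.lt_iff_lt.1 hu.2
    omega
  exact hC.segment_subset (hwC i hi) (hwC (i + 1) (by omega))
    (hv.inv_smul_mem_segment (hw₀_nonneg.trans_lt hw₀i) ⟨hwi, hti.le⟩)

theorem hull_of_self_similar_general (n : ℕ) (w₀ : ℝ)
    (P : ℝ → RVec n) (hP : IsProperSys n (Set.Ici w₀) P)
    (w : ℕ → ℝ) (hw0 : w 0 = w₀) (hmono : StrictMono w)
    (hdiv : ∀ i, IsDivisionNumber n (Set.Ici w₀) P (w i))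
    (hall : ∀ q, IsDivisionNumber n (Set.Ici w₀) P q → ∃ i, q = w i)
    (ρ : ℝ) (hρ : 1 < ρ) (hss : ∀ q, w₀ ≤ q → P (ρ * q) = ρ • P q)
    (s : ℕ) (hs : 1 ≤ s) (hρw : ρ * w 1 = w (s + 1)) :
    convexHull ℝ (FSet n (Set.Ici w₀) P) =
      convexHull ℝ {x : RVec n | ∃ i : ℕ, 1 ≤ i ∧ i ≤ s ∧ x = (w i)⁻¹ • P (w i)} := by
  set S := {x : RVec n | ∃ i : ℕ, 1 ≤ i ∧ i ≤ s ∧ x = (w i)⁻¹ • P (w i)}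
  have hw₀_nonneg : 0 ≤ w₀ := hP.1.1 self_mem_Ici
  have hw_gt : ∀ i, 1 ≤ i → w₀ < w i := fun i hi => hw0 ▸ hmono (by omega)
  have hdiv_mul {q : ℝ} := @isDivisionNumber_mul_iff n w₀ P ρ q hw₀_nonneg hρ hss
  have hshift : ∀ i, 1 ≤ i → ρ * w i = w (i + s) :=
    (OrderIso.mulLeft₀ ρ (by linarith)).apply_eq_add_of_strictMono hmono
      (fun i hi => hall _ ((hdiv_mul (hw_gt i hi)).2 (hdiv i)))
      (fun x hx ⟨j, hj⟩ => hall x <| (hdiv_mul (hw0 ▸ hx)).1 <|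
        (show ρ * x = w j from hj) ▸ hdiv j) hρw
  have hwS : ∀ j, 1 ≤ j → (w j)⁻¹ • P (w j) ∈ convexHull ℝ S := fun j hj => by
    obtain ⟨r, hr₁, hrs, hr⟩ :=
      exists_inv_smul_eq_of_mul_eq_shift hw₀_nonneg hρ.le hss hw0 hmono hs hshift hj
    exact subset_convexHull ℝ S ⟨r, hr₁, hrs, hr⟩
  refine (convexHull_min ?_ (convex_convexHull ℝ S)).antisymm (convexHull_mono ?_)
  · rintro x ⟨q, -, -, hq, hlim⟩
    have hS : S.Finite := ((finite_Icc 1 s).image fun i => (w i)⁻¹ • P (w i)).subset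
      fun x ⟨i, hi₁, his, hx⟩ => ⟨i, ⟨hi₁, his⟩, hx.symm⟩
    refine (hS.isCompact_convexHull (𝕜 := ℝ)).isClosed.mem_of_tendsto hlim
      ((hq.eventually_ge_atTop (w 1)).mono fun j hj => ?_)
    exact hP.1.inv_smul_mem_of_convex hw0 hmono hall
      (not_bddAbove_range_of_mul_eq_shift hshift hρ (hw₀_nonneg.trans_lt (hw_gt 1 le_rfl)))
      (convex_convexHull ℝ S) hwS hj
  · rintro _ ⟨i, hi, -, rfl⟩
    exact inv_smul_mem_FSet hw₀_nonneg hρ hss (hw_gt i hi)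

/-- **Corollary (self-similar case).** Let `P` be a proper self-similar `n`-system on
`[w₀, ∞)` with division numbers `w₀ = w(0) < w(1) < ⋯`, with `ρ > 1` such that
`P(ρq) = ρP(q)` for `q ≥ w₀`, and `s ≥ 1` with `ρ w(1) = w(s+1)`.  Then `K(P)` is the
convex hull of the finite set `{w_i⁻¹ • P(w_i) : 1 ≤ i ≤ s}`. -/
theorem hull_of_self_similar (n : ℕ) (hn : 2 ≤ n) (w₀ : ℝ)
    (P : ℝ → RVec n) (hP : IsProperSys n (Set.Ici w₀) P)
    (w : ℕ → ℝ) (hw0 : w 0 = w₀) (hmono : StrictMono w)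
    (hdiv : ∀ i, IsDivisionNumber n (Set.Ici w₀) P (w i))
    (hall : ∀ q, IsDivisionNumber n (Set.Ici w₀) P q → ∃ i, q = w i)
    (ρ : ℝ) (hρ : 1 < ρ) (hss : ∀ q, w₀ ≤ q → P (ρ * q) = ρ • P q)
    (s : ℕ) (hs : 1 ≤ s) (hρw : ρ * w 1 = w (s + 1)) :
    convexHull ℝ (FSet n (Set.Ici w₀) P) =
      convexHull ℝ {x : RVec n | ∃ i : ℕ, 1 ≤ i ∧ i ≤ s ∧ x = (w i)⁻¹ • P (w i)} :=
  hull_of_self_similar_general n w₀ P hP w hw0 hmono hdiv hall ρ hρ hss s hs hρw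
end
end

section
/- Let n ≥ 2, let q_0 > 0, let R be an n-system on [q_0, ∞), and let ε > 0. Then there exists u ≥ q_0 such that {q^{-1}R(q) : q ≥ u} ⊆ F(R) + [−ε, ε]^n. Moreover, for each u ≥ q_0 there exists v > u such that F(R) ⊆ {q^{-1}R(q) : u ≤ q ≤ v} + [−ε, ε]^n. -/
open Filter Set Pointwise Topology

noncomputable section

/-!
Everything follows from compactness: by (S1), `q⁻¹ • R q` stays in the cube `[0,1]^n`. If points
`q⁻¹ • R q` with arbitrarily large `q` stayed `ε`-far from `F(R)`, a convergent subsequence would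
produce a point of `F(R)` close to them. Conversely `F(R)` is totally bounded, so finitely many
of its points, each approximated by some `q⁻¹ • R q` with `q ≥ u`, are `ε/2`-dense in it; `v` is
the largest of these finitely many `q`.
-/

open Metric

section SeqLimitsAtTop

variable {X : Type*} [PseudoMetricSpace X]

def seqLimitsAtTop (f : ℝ → X) (I : Set ℝ) : Set X :=
  {x | ∃ q : ℕ → ℝ, (∀ i, q i ∈ I) ∧ StrictMono q ∧ Tendsto q atTop atTop ∧
    Tendsto (f ∘ q) atTop (𝓝 x)}

theorem fSet_eq_seqLimitsAtTop (n : ℕ) (I : Set ℝ) (P : ℝ → RVec n) :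
    FSet n I P = seqLimitsAtTop (fun q => q⁻¹ • P q) I :=
  rfl

variable {f : ℝ → X} {I : Set ℝ} {K : Set X}

theorem seqLimitsAtTop_subset (hK : IsClosed K) (hfK : ∀ q ∈ I, f q ∈ K) :
    seqLimitsAtTop f I ⊆ K := by
  rintro x ⟨q, hqI, -, -, hlim⟩
  exact hK.mem_of_tendsto hlim (Eventually.of_forall fun i => hfK _ (hqI i))

theorem exists_mem_seqLimitsAtTop_subseq_tendsto (hK : IsCompact K) {q : ℕ → ℝ}
    (hqI : ∀ i, q i ∈ I) (hq : Tendsto q atTop atTop) (hfK : ∀ i, f (q i) ∈ K) :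
    ∃ x ∈ seqLimitsAtTop f I, ∃ φ : ℕ → ℕ, StrictMono φ ∧
      Tendsto (f ∘ q ∘ φ) atTop (𝓝 x) := by
  obtain ⟨φ, hφ, hqφ⟩ := strictMono_subseq_of_tendsto_atTop hq
  obtain ⟨x, -, ψ, hψ, hx⟩ := hK.tendsto_subseq fun i => hfK (φ i)
  exact ⟨x, ⟨q ∘ φ ∘ ψ, fun i => hqI _, hqφ.comp hψ,
    (hq.comp hφ.tendsto_atTop).comp hψ.tendsto_atTop, hx⟩, φ ∘ ψ, hφ.comp hψ, hx⟩

theorem eventually_exists_mem_seqLimitsAtTop_dist_lt (hK : IsCompact K)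
    (hfK : ∀ q ∈ I, f q ∈ K) {ε : ℝ} (hε : 0 < ε) :
    ∀ᶠ q in atTop, q ∈ I → ∃ x ∈ seqLimitsAtTop f I, dist (f q) x < ε := by
  by_contra h
  push Not at h
  choose q hq hqI hfar using fun k : ℕ => frequently_atTop.1 h k
  obtain ⟨x, hx, φ, -, hlim⟩ := exists_mem_seqLimitsAtTop_subseq_tendsto hK hqI
    (tendsto_atTop_mono hq tendsto_natCast_atTop_atTop) fun k => hfK _ (hqI k)
  obtain ⟨k, hk⟩ := (tendsto_nhds.1 hlim ε hε).exists
  exact (hfar (φ k) x hx).not_gt hk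

theorem exists_ge_dist_lt_of_mem_seqLimitsAtTop {x : X} (hx : x ∈ seqLimitsAtTop f I)
    (u : ℝ) {ε : ℝ} (hε : 0 < ε) : ∃ q ∈ I, u ≤ q ∧ dist (f q) x < ε := by
  obtain ⟨q, hqI, -, hq, hlim⟩ := hx
  obtain ⟨i, hu, hi⟩ := ((hq.eventually_ge_atTop u).and (tendsto_nhds.1 hlim ε hε)).exists
  exact ⟨q i, hqI i, hu, hi⟩

theorem exists_forall_mem_seqLimitsAtTop_exists_le_le_dist_lt
    (hF : TotallyBounded (seqLimitsAtTop f I)) (u : ℝ) {ε : ℝ} (hε : 0 < ε) :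
    ∃ v, ∀ x ∈ seqLimitsAtTop f I, ∃ q ∈ I, u ≤ q ∧ q ≤ v ∧ dist (f q) x < ε := by
  obtain ⟨t, htF, ht, hcover⟩ := finite_approx_of_totallyBounded hF (ε / 2) (half_pos hε)
  choose! Q hQI hQu hQ using fun y (hy : y ∈ seqLimitsAtTop f I) =>
    exists_ge_dist_lt_of_mem_seqLimitsAtTop hy u (half_pos hε)
  obtain ⟨v, hv⟩ := (ht.image Q).bddAbove
  refine ⟨v, fun x hx => ?_⟩
  obtain ⟨y, hyt, hxy⟩ := mem_iUnion₂.1 (hcover hx)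
  refine ⟨Q y, hQI y (htF hyt), hQu y (htF hyt), hv (mem_image_of_mem Q hyt), ?_⟩
  calc dist (f (Q y)) x ≤ dist (f (Q y)) y + dist y x := dist_triangle _ _ _
    _ < ε / 2 + ε / 2 := add_lt_add (hQ y (htF hyt)) (by rwa [dist_comm, ← mem_ball])
    _ = ε := add_halves ε

end SeqLimitsAtTop

theorem IsNSystem.inv_smul_mem_Icc {n : ℕ} {I : Set ℝ} {P : ℝ → RVec n}
    (hP : IsNSystem n I P) {q : ℝ} (hq : q ∈ I) : q⁻¹ • P q ∈ Icc (0 : RVec n) 1 := by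
  obtain ⟨⟨hnonneg, -, hsum⟩, -⟩ := hP.2.2.2 q hq
  have hq0 : 0 ≤ q := hP.1 hq
  refine ⟨fun i => mul_nonneg (inv_nonneg.2 hq0) (hnonneg i), fun i => ?_⟩
  have hle : P q i ≤ q :=
    (Finset.single_le_sum (fun j _ => hnonneg j) (Finset.mem_univ i)).trans_eq hsum
  exact inv_mul_le_one_of_le₀ hle hq0

theorem mem_add_cubeNbhd_of_dist_le {n : ℕ} {S : Set (RVec n)} {x y : RVec n} (hx : x ∈ S)
    {ε : ℝ} (h : dist y x ≤ ε) : y ∈ S + cubeNbhd n ε :=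
  ⟨x, hx, y - x, fun i => (Real.dist_eq (y i) (x i) ▸ dist_le_pi_dist y x i).trans h,
    add_sub_cancel x y⟩

theorem selection_lemma_general (n : ℕ) (q₀ : ℝ)
    (R : ℝ → RVec n) (hR : IsNSystem n (Set.Ici q₀) R) (ε : ℝ) (hε : 0 < ε) :
    (∃ u : ℝ, q₀ ≤ u ∧
      {x : RVec n | ∃ q : ℝ, u ≤ q ∧ x = q⁻¹ • R q}
        ⊆ FSet n (Set.Ici q₀) R + cubeNbhd n ε) ∧
    (∀ u : ℝ, q₀ ≤ u → ∃ v : ℝ, u < v ∧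
      FSet n (Set.Ici q₀) R
        ⊆ {x : RVec n | ∃ q : ℝ, u ≤ q ∧ q ≤ v ∧ x = q⁻¹ • R q} + cubeNbhd n ε) := by
  have hK : ∀ q ∈ Ici q₀, q⁻¹ • R q ∈ Icc (0 : RVec n) 1 := fun q => hR.inv_smul_mem_Icc
  rw [fSet_eq_seqLimitsAtTop]
  constructor
  · obtain ⟨u, hu⟩ := eventually_atTop.1
      (eventually_exists_mem_seqLimitsAtTop_dist_lt isCompact_Icc hK hε)
    refine ⟨max u q₀, le_max_right _ _, ?_⟩
    rintro _ ⟨q, hq, rfl⟩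
    obtain ⟨x, hx, hdist⟩ := hu q (le_of_max_le_left hq) (le_of_max_le_right hq)
    exact mem_add_cubeNbhd_of_dist_le hx hdist.le
  · intro u _
    have hF := isCompact_Icc.totallyBounded.subset (seqLimitsAtTop_subset isClosed_Icc hK)
    obtain ⟨v, hv⟩ := exists_forall_mem_seqLimitsAtTop_exists_le_le_dist_lt hF u hε
    refine ⟨max v (u + 1), by linarith [le_max_right v (u + 1)], fun x hx => ?_⟩
    obtain ⟨q, -, huq, hqv, hdist⟩ := hv x hx
    refine mem_add_cubeNbhd_of_dist_le ?_ (dist_comm x _ ▸ hdist.le)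
    exact ⟨q, huq, hqv.trans (le_max_left _ _), rfl⟩

/-- **Lemma (approximation of `F(R)`).** Let `R` be an `n`-system on `[q₀, ∞)` and
`ε > 0`.  Then there is `u ≥ q₀` with `{q⁻¹R(q) : q ≥ u} ⊆ F(R) + [-ε,ε]^n`, and for
each `u ≥ q₀` there is `v > u` with `F(R) ⊆ {q⁻¹R(q) : u ≤ q ≤ v} + [-ε,ε]^n`. -/
theorem selection_lemma (n : ℕ) (hn : 2 ≤ n) (q₀ : ℝ) (hq₀ : 0 < q₀)
    (R : ℝ → RVec n) (hR : IsNSystem n (Set.Ici q₀) R) (ε : ℝ) (hε : 0 < ε) :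
    (∃ u : ℝ, q₀ ≤ u ∧
      {x : RVec n | ∃ q : ℝ, u ≤ q ∧ x = q⁻¹ • R q}
        ⊆ FSet n (Set.Ici q₀) R + cubeNbhd n ε) ∧
    (∀ u : ℝ, q₀ ≤ u → ∃ v : ℝ, u < v ∧
      FSet n (Set.Ici q₀) R
        ⊆ {x : RVec n | ∃ q : ℝ, u ≤ q ∧ q ≤ v ∧ x = q⁻¹ • R q} + cubeNbhd n ε) :=
  selection_lemma_general n q₀ R hR ε hε
end
end
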